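/- arXiv:2406.01979 — 5 statements merged into one kernel-verified Lean document; each statement's English description precedes it below -/
import Mathlib

section
/- Let n ≥ 9 and let F, F' be facets of Δ₃(W_n) with F ∈ T_s and F' ∈ T_t for some s ≠ t, where F^c = {α_s} ⊔ {s_1, s_2} and F'^c = (F^c∖{ν}) ⊔ {λ} for some ν ∈ F^c and λ ∈ F. If λ <_O α_s, then F' ≺ F. -/
open Finset

/-- The squared cycle graph `Wₙ` on the vertex set `{0, 1, …, n−1} ⊆ ℕ`:
`x` and `y` are adjacent iff `x − y ≡ ±1, ±2 (mod n)`. -/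
def sqCycle (n : ℕ) : SimpleGraph ℕ where
  Adj x y := x < n ∧ y < n ∧ x ≠ y ∧
    ((x + 1) % n = y ∨ (x + 2) % n = y ∨ (y + 1) % n = x ∨ (y + 2) % n = x)
  symm := by
    constructor
    rintro x y ⟨hx, hy, hxy, h⟩
    exact ⟨hy, hx, hxy.symm, by tauto⟩
  loopless := by
    constructor
    rintro x ⟨-, -, hxx, -⟩
    exact hxx rfl

/-- The complement `F^c` of `F` in the vertex set of `Wₙ`. -/
def cmpl (n : ℕ) (F : Finset ℕ) : Finset ℕ := Finset.range n \ F

/-- `F` is a facet of the 3-cut complex `Δ₃(Wₙ)` : an `(n−3)`-subset of the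
vertex set whose complement induces a disconnected subgraph. -/
def IsFacet (n : ℕ) (F : Finset ℕ) : Prop :=
  F ⊆ Finset.range n ∧ F.card = n - 3 ∧
    ¬ ((sqCycle n).induce (↑(cmpl n F) : Set ℕ)).Connected

/-- `m = (n+1)/2` if `n` is odd and `m = n/2` if `n` is even. -/
def mVal (n : ℕ) : ℕ := (n + 1) / 2

/-- `α_t = m + (−1)^(t−1) ⌊t/2⌋ (mod n)`. -/
def alphaSeq (n t : ℕ) : ℕ :=
  ((((mVal n : ℤ) + (-1) ^ (t - 1) * ((t / 2 : ℕ) : ℤ)) % (n : ℤ))).toNat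

/-- `x <_O y` : `x` appears strictly before `y` in `O = (α_1, …, α_n)`. -/
def ltO (n x y : ℕ) : Prop :=
  ∃ s t : ℕ, 1 ≤ s ∧ s < t ∧ t ≤ n ∧ alphaSeq n s = x ∧ alphaSeq n t = y

/-- `F ∈ T_s` : `α_s` is the `<_O`-least element of `F^c`. -/
def classT (n s : ℕ) (F : Finset ℕ) : Prop :=
  1 ≤ s ∧ s ≤ n ∧ alphaSeq n s ∈ cmpl n F ∧
    ∀ x ∈ cmpl n F, x ≠ alphaSeq n s → ltO n (alphaSeq n s) x

/-- `F ∈ T_s` together with the decomposition `F^c = {α_s} ⊔ {s₁, s₂}`, `s₁ < s₂`. -/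
def cDecomp (n s s1 s2 : ℕ) (F : Finset ℕ) : Prop :=
  classT n s F ∧ s1 < s2 ∧ alphaSeq n s ≠ s1 ∧ alphaSeq n s ≠ s2 ∧
    cmpl n F = {alphaSeq n s, s1, s2}

/-- The order `≪` on facets. -/
def llt (n : ℕ) (F F' : Finset ℕ) : Prop :=
  ∃ s t s1 s2 t1 t2, cDecomp n s s1 s2 F ∧ cDecomp n t t1 t2 F' ∧
    (s < t ∨ (s = t ∧ (s1 < t1 ∨ (s1 = t1 ∧ s2 < t2))))

/-- The exceptional set `D` of facets (conditions (D1)–(D4)). -/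
def memD (n : ℕ) (F : Finset ℕ) : Prop :=
  ∃ s, classT n s F ∧
    ((alphaSeq n s = mVal n + 1 ∧
        cmpl n F = {alphaSeq n s, alphaSeq n s - 3, alphaSeq n s + 1}) ∨
      (alphaSeq n s = mVal n - 1 ∧
        cmpl n F = {alphaSeq n s, alphaSeq n s - 1, alphaSeq n s + 3}) ∨
      (alphaSeq n s = mVal n + 1 ∧
        cmpl n F = {alphaSeq n s, alphaSeq n s - 4, alphaSeq n s - 3}) ∨
      (mVal n - 1 ≤ alphaSeq n s ∧ alphaSeq n s ≤ n - 6 ∧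
        cmpl n F = {alphaSeq n s, alphaSeq n s + 3, alphaSeq n s + 4}))

/-- The shelling order `≺` on facets. -/
def precOrd (n : ℕ) (F F' : Finset ℕ) : Prop :=
  (¬ memD n F ∧ ¬ memD n F' ∧ llt n F F') ∨
  (memD n F ∧ ¬ memD n F' ∧ ∃ s t, classT n s F ∧ classT n t F' ∧ s < t) ∨
  (¬ memD n F ∧ memD n F' ∧ ∃ s t, classT n s F ∧ classT n t F' ∧ s ≤ t) ∨
  (memD n F ∧ memD n F' ∧ llt n F F')

/-- `F` is a spanning facet for the shelling order `≺`. -/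
def IsSpanningFacet (n : ℕ) (F : Finset ℕ) : Prop :=
  IsFacet n F ∧ ∀ lam ∈ F, ∃ G, IsFacet n G ∧ precOrd n G F ∧ G ∩ F = F.erase lam

/-- Condition (S1): `α_s = 3` and `s₁ ∈ V∖({0,1,…,2m−4} ∪ {n−1})`. -/
def condS1 (n a s1 : ℕ) : Prop :=
  a = 3 ∧ s1 ∈ Finset.range n \ (Finset.range (2 * mVal n - 3) ∪ {n - 1})

/-- Condition (S2): `4 ≤ α_s ≤ m−2` and
`s₁ ∈ V∖({α_s−4, α_s−3, α_s−2} ∪ {α_s, …, 2m−α_s−1} ∪ {n−1})`. -/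
def condS2 (n a s1 : ℕ) : Prop :=
  4 ≤ a ∧ a ≤ mVal n - 2 ∧
    s1 ∈ Finset.range n \
      (({a - 4, a - 3, a - 2} : Finset ℕ) ∪ Finset.Ico a (2 * mVal n - a) ∪ {n - 1})

/-- Condition (S3): `m−1 ≤ α_s ≤ n−3` and
`s₁ ∈ V∖({ω, ω+1, …, α_s+3 (mod n)} ∪ {y})`, with `ω = min{2m−α_s, α_s−4}` and
`y = n−1` if `α_s < n−4`, `y = 0` if `α_s = n−4`, `y = 1` if `α_s > n−4`. -/
def condS3 (n a s1 : ℕ) : Prop :=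
  mVal n - 1 ≤ a ∧ a ≤ n - 3 ∧
    s1 ∈ Finset.range n \
      ((Finset.Ico (min (2 * mVal n - a) (a - 4)) (a + 4)).image (· % n) ∪
        {if a < n - 4 then n - 1 else if a = n - 4 then 0 else 1})

/-- The set `S` of facets. -/
def memS (n : ℕ) (F : Finset ℕ) : Prop :=
  IsFacet n F ∧ ∃ s s1, cDecomp n s s1 (n - 1) F ∧
    (condS1 n (alphaSeq n s) s1 ∨ condS2 n (alphaSeq n s) s1 ∨ condS3 n (alphaSeq n s) s1)

lemma alphaSeq_odd (n t : ℕ) (h : t % 2 = 1) :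
    alphaSeq n t = (mVal n + t / 2) % n := by
  unfold alphaSeq
  have h1 : (-1 : ℤ) ^ (t - 1) = 1 := Even.neg_one_pow (Nat.even_iff.mpr (by omega))
  rw [h1, one_mul,
    show ((mVal n : ℤ) + ((t / 2 : ℕ) : ℤ)) = ((mVal n + t / 2 : ℕ) : ℤ) by push_cast; ring,
    ← Int.natCast_mod, Int.toNat_natCast]

lemma alphaSeq_even (n t : ℕ) (hn : 1 ≤ n) (h : t % 2 = 0) (h1 : 1 ≤ t) (h2 : t ≤ n) :
    alphaSeq n t = mVal n - t / 2 := by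
  unfold alphaSeq
  have hp : (-1 : ℤ) ^ (t - 1) = -1 := Odd.neg_one_pow (Nat.odd_iff.mpr (by omega))
  have hm : t / 2 ≤ mVal n := by unfold mVal; omega
  have hlt' : mVal n - t / 2 < n := by unfold mVal; omega
  rw [hp,
    show ((mVal n : ℤ) + -1 * ((t / 2 : ℕ) : ℤ)) = ((mVal n - t / 2 : ℕ) : ℤ) by
      push_cast [hm]; ring,
    Int.emod_eq_of_lt (by positivity) (by exact_mod_cast hlt'), Int.toNat_natCast]

lemma alphaSeq_inj (n i j : ℕ) (hn : 9 ≤ n) (hi1 : 1 ≤ i) (hin : i ≤ n)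
    (hj1 : 1 ≤ j) (hjn : j ≤ n) (h : alphaSeq n i = alphaSeq n j) : i = j := by
  have hm : mVal n = (n + 1) / 2 := rfl
  have hmod : ∀ u : ℕ, u ≤ n → u % n = u ∨ (u % n = 0 ∧ u = n) := by
    intro u hu
    rcases lt_or_eq_of_le hu with h' | h'
    · exact Or.inl (Nat.mod_eq_of_lt h')
    · subst h'; exact Or.inr ⟨Nat.mod_self u, rfl⟩
  rcases Nat.even_or_odd i with hie | hio <;> rcases Nat.even_or_odd j with hje | hjo
  · rw [alphaSeq_even n i (by omega) (Nat.even_iff.mp hie) hi1 hin,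
      alphaSeq_even n j (by omega) (Nat.even_iff.mp hje) hj1 hjn] at h
    have hie' := Nat.even_iff.mp hie
    have hje' := Nat.even_iff.mp hje
    omega
  · rw [alphaSeq_even n i (by omega) (Nat.even_iff.mp hie) hi1 hin,
      alphaSeq_odd n j (Nat.odd_iff.mp hjo)] at h
    have h2 := hmod (mVal n + j / 2) (by omega)
    have hie' := Nat.even_iff.mp hie
    have hjo' := Nat.odd_iff.mp hjo
    omega
  · rw [alphaSeq_odd n i (Nat.odd_iff.mp hio),
      alphaSeq_even n j (by omega) (Nat.even_iff.mp hje) hj1 hjn] at h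
    have h2 := hmod (mVal n + i / 2) (by omega)
    have hio' := Nat.odd_iff.mp hio
    have hje' := Nat.even_iff.mp hje
    omega
  · rw [alphaSeq_odd n i (Nat.odd_iff.mp hio), alphaSeq_odd n j (Nat.odd_iff.mp hjo)] at h
    have h2 := hmod (mVal n + i / 2) (by omega)
    have h3 := hmod (mVal n + j / 2) (by omega)
    have hio' := Nat.odd_iff.mp hio
    have hjo' := Nat.odd_iff.mp hjo
    omega

lemma ltO_trans' (n x y z : ℕ) (hn : 9 ≤ n) (h1 : ltO n x y) (h2 : ltO n y z) :
    ltO n x z := by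
  obtain ⟨a, b, ha1, hab, hbn, hax, hby⟩ := h1
  obtain ⟨c, d, hc1, hcd, hdn, hcy, hdz⟩ := h2
  have hbc : b = c := alphaSeq_inj n b c hn (by omega) hbn hc1 (by omega)
    (hby.trans hcy.symm)
  exact ⟨a, d, ha1, by omega, hdn, hax, hdz⟩

lemma ltO_lt (n s t : ℕ) (hn : 9 ≤ n) (hs1 : 1 ≤ s) (hsn : s ≤ n) (ht1 : 1 ≤ t)
    (htn : t ≤ n) (h : ltO n (alphaSeq n s) (alphaSeq n t)) : s < t := by
  obtain ⟨a, b, ha1, hab, hbn, hax, hbx⟩ := h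
  have h1 := alphaSeq_inj n a s hn ha1 (by omega) hs1 hsn hax
  have h2 := alphaSeq_inj n b t hn (by omega) hbn ht1 htn hbx
  omega

/-- If `F ∈ T_s`, `F' ∈ T_t` with `s ≠ t`, `F^c = {α_s} ⊔ {s₁, s₂}`,
`F'^c = (F^c∖{ν}) ⊔ {λ}` for some `ν ∈ F^c`, `λ ∈ F`, and `λ <_O α_s`, then `F' ≺ F`. -/
theorem prec_of_ltO_alpha (n : ℕ) (hn : 9 ≤ n) (F F' : Finset ℕ)
    (hF : IsFacet n F) (hF' : IsFacet n F')
    (s t s1 s2 : ℕ) (hst : s ≠ t)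
    (hTs : cDecomp n s s1 s2 F) (hTt : classT n t F')
    (ν lam : ℕ) (hν : ν ∈ cmpl n F) (hlam : lam ∈ F)
    (hc : cmpl n F' = insert lam ((cmpl n F).erase ν))
    (hlt : ltO n lam (alphaSeq n s)) :
    precOrd n F' F := by
  obtain ⟨hTsF, hs12, hαs1, hαs2, hFc⟩ := hTs
  obtain ⟨hs1', hsn, hαsF, hleast⟩ := hTsF
  obtain ⟨ht1, htn, hαtF', hleast'⟩ := hTt
  have hTscopy : classT n s F := ⟨hs1', hsn, hαsF, hleast⟩
  have hTtcopy : classT n t F' := ⟨ht1, htn, hαtF', hleast'⟩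
  have hTsdec : cDecomp n s s1 s2 F := ⟨hTscopy, hs12, hαs1, hαs2, hFc⟩
  have hlamc : lam ∈ cmpl n F' := by rw [hc]; exact mem_insert_self _ _
  have hts : ltO n (alphaSeq n t) (alphaSeq n s) := by
    by_cases hh : lam = alphaSeq n t
    · rw [← hh]; exact hlt
    · exact ltO_trans' n _ _ _ hn (hleast' lam hlamc hh) hlt
  have htlts : t < s := ltO_lt n t s hn ht1 htn hs1' hsn hts
  -- cardinality of the complement of F'
  have hlamF : lam ∉ cmpl n F := by
    simp only [cmpl, mem_sdiff]; tauto
  have h3 : ({alphaSeq n s, s1, s2} : Finset ℕ).card = 3 := by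
    rw [card_insert_of_notMem (by simp [hαs1, hαs2]),
      card_insert_of_notMem (by simp [hs12.ne]), card_singleton]
  have h2 : (cmpl n F).card = 3 := by rw [hFc]; exact h3
  have hcard : (cmpl n F').card = 3 := by
    rw [hc, card_insert_of_notMem (fun hx => hlamF (mem_of_mem_erase hx)),
      card_erase_of_mem hν, h2]
  have hecard : ((cmpl n F').erase (alphaSeq n t)).card = 2 := by
    rw [card_erase_of_mem hαtF', hcard]
  obtain ⟨a, b, hab, hset⟩ := card_eq_two.mp hecard
  have ha : a ∈ (cmpl n F').erase (alphaSeq n t) := by rw [hset]; simp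
  have hb : b ∈ (cmpl n F').erase (alphaSeq n t) := by rw [hset]; simp
  have haα : alphaSeq n t ≠ a := (ne_of_mem_erase ha).symm
  have hbα : alphaSeq n t ≠ b := (ne_of_mem_erase hb).symm
  have hdecomp : cmpl n F' = {alphaSeq n t, a, b} := by
    rw [← hset, insert_erase hαtF']
  have hdec' : ∃ t1 t2, cDecomp n t t1 t2 F' := by
    rcases hab.lt_or_gt with hlt' | hlt'
    · exact ⟨a, b, hTtcopy, hlt', haα, hbα, hdecomp⟩
    · refine ⟨b, a, hTtcopy, hlt', hbα, haα, ?_⟩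
      rw [hdecomp, Finset.pair_comm a b]
  obtain ⟨t1, t2, hdec⟩ := hdec'
  have hllt : llt n F' F := ⟨t, s, t1, t2, s1, s2, hdec, hTsdec, Or.inl htlts⟩
  by_cases hD' : memD n F' <;> by_cases hD : memD n F
  · exact Or.inr (Or.inr (Or.inr ⟨hD', hD, hllt⟩))
  · exact Or.inr (Or.inl ⟨hD', hD, t, s, hTtcopy, hTscopy, htlts⟩)
  · exact Or.inr (Or.inr (Or.inl ⟨hD', hD, t, s, hTtcopy, hTscopy, le_of_lt htlts⟩))
  · exact Or.inl ⟨hD', hD, hllt⟩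
end

section
/- Let n ≥ 9 and let F_i ≺ F_j be facets of Δ₃(W_n) with F_j ∉ D. If F_i and F_j lie in different classes T_{i₀} ≠ T_{j₀} (i.e., the <_O-least elements of F_i^c and F_j^c differ), then there exists a facet F_r of Δ₃(W_n) with F_r ≺ F_j and F_r ∩ F_j = F_j∖{λ} for some λ ∈ F_j∖F_i. -/
open Finset

section Aux

/-- Arithmetic version of adjacency in `sqCycle`. -/
def A2 (n x y : ℕ) : Prop :=
  x+1=y ∨ x+2=y ∨ y+1=x ∨ y+2=x ∨ x+1=y+n ∨ x+2=y+n ∨ y+1=x+n ∨ y+2=x+n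

/-- The position of a vertex in the order `O`. -/
def posO (n x : ℕ) : ℕ :=
  if x = 0 then n else if mVal n ≤ x then 2*(x - mVal n)+1 else 2*(mVal n - x)

lemma modlem (n c b : ℕ) (hc : c < 2*n) (hb : b < n) : c % n = b ↔ c = b ∨ c = b + n := by
  rcases Nat.lt_or_ge c n with h|h
  · rw [Nat.mod_eq_of_lt h]; omega
  · rw [Nat.mod_eq_sub_mod h, Nat.mod_eq_of_lt (by omega)]; omega

lemma adj_iff (n x y : ℕ) (hn : 3 ≤ n) (hx : x < n) (hy : y < n) :
    (sqCycle n).Adj x y ↔ (x ≠ y ∧ A2 n x y) := by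
  have h1 := modlem n (x+1) y (by omega) hy
  have h2 := modlem n (x+2) y (by omega) hy
  have h3 := modlem n (y+1) x (by omega) hx
  have h4 := modlem n (y+2) x (by omega) hx
  have hdef : (sqCycle n).Adj x y ↔ (x < n ∧ y < n ∧ x ≠ y ∧
      ((x + 1) % n = y ∨ (x + 2) % n = y ∨ (y + 1) % n = x ∨ (y + 2) % n = x)) := Iff.rfl
  rw [hdef, h1, h2, h3, h4]
  unfold A2
  omega

lemma alpha_val (n t : ℕ) (hn : 2 ≤ n) (h1 : 1 ≤ t) (h2 : t ≤ n) :
    (t % 2 = 0 ∧ alphaSeq n t = mVal n - t/2) ∨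
    (t % 2 = 1 ∧ mVal n + t/2 < n ∧ alphaSeq n t = mVal n + t/2) ∨
    (t % 2 = 1 ∧ mVal n + t/2 = n ∧ alphaSeq n t = 0) := by
  have hm : mVal n = (n+1)/2 := rfl
  unfold alphaSeq
  rcases Nat.even_or_odd t with he | ho
  · left
    obtain ⟨k, hk⟩ := he
    have hpow : ((-1 : ℤ))^(t-1) = -1 := Odd.neg_one_pow ⟨k-1, by omega⟩
    rw [hpow]
    have hmod : (((mVal n : ℤ) + -1 * ((t/2 : ℕ) : ℤ)) % (n:ℤ)) = (mVal n : ℤ) - ((t/2:ℕ):ℤ) := by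
      rw [show ((mVal n : ℤ) + -1 * ((t/2 : ℕ) : ℤ)) = (mVal n : ℤ) - ((t/2:ℕ):ℤ) by ring]
      exact Int.emod_eq_of_lt (by omega) (by omega)
    rw [hmod]
    exact ⟨by omega, by omega⟩
  · obtain ⟨k, hk⟩ := ho
    have hpow : ((-1 : ℤ))^(t-1) = 1 := Even.neg_one_pow ⟨k, by omega⟩
    rw [hpow]
    have hle : mVal n + t/2 ≤ n := by omega
    rcases Nat.lt_or_ge (mVal n + t/2) n with hlt | hge
    · right; left
      have hmod : (((mVal n : ℤ) + 1 * ((t/2 : ℕ) : ℤ)) % (n:ℤ)) = (mVal n : ℤ) + ((t/2:ℕ):ℤ) := by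
        rw [show ((mVal n : ℤ) + 1 * ((t/2 : ℕ) : ℤ)) = (mVal n : ℤ) + ((t/2:ℕ):ℤ) by ring]
        exact Int.emod_eq_of_lt (by omega) (by omega)
      rw [hmod]
      exact ⟨by omega, hlt, by omega⟩
    · right; right
      have heq : mVal n + t/2 = n := by omega
      have hmod : (((mVal n : ℤ) + 1 * ((t/2 : ℕ) : ℤ)) % (n:ℤ)) = 0 := by
        rw [show ((mVal n : ℤ) + 1 * ((t/2 : ℕ) : ℤ)) = (n:ℤ) by omega]
        simp
      rw [hmod]
      exact ⟨by omega, heq, by omega⟩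

lemma posA (n t : ℕ) (hn : 9 ≤ n) (h1 : 1 ≤ t) (h2 : t ≤ n) :
    alphaSeq n t < n ∧ posO n (alphaSeq n t) = t := by
  have hm : mVal n = (n+1)/2 := rfl
  rcases alpha_val n t (by omega) h1 h2 with ⟨hp, he⟩ | ⟨hp, hlt, he⟩ | ⟨hp, heq, he⟩ <;>
    · rw [he]; unfold posO
      refine ⟨by omega, ?_⟩
      split_ifs <;> omega

lemma posB (n x : ℕ) (hn : 9 ≤ n) (hx : x < n) :
    1 ≤ posO n x ∧ posO n x ≤ n ∧ alphaSeq n (posO n x) = x := by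
  have hm : mVal n = (n+1)/2 := rfl
  unfold posO
  split_ifs with h0 hge
  · refine ⟨by omega, le_refl n, ?_⟩
    rcases alpha_val n n (by omega) (by omega) le_rfl with ⟨hp,he⟩|⟨hp,hlt,he⟩|⟨hp,heq,he⟩ <;> omega
  · refine ⟨by omega, by omega, ?_⟩
    rcases alpha_val n (2*(x-mVal n)+1) (by omega) (by omega) (by omega)
      with ⟨hp,he⟩|⟨hp,hlt,he⟩|⟨hp,heq,he⟩ <;> omega
  · refine ⟨by omega, by omega, ?_⟩
    rcases alpha_val n (2*(mVal n - x)) (by omega) (by omega) (by omega)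
      with ⟨hp,he⟩|⟨hp,hlt,he⟩|⟨hp,heq,he⟩ <;> omega

lemma ltO_iff (n x y : ℕ) (hn : 9 ≤ n) (hx : x < n) (hy : y < n) :
    ltO n x y ↔ posO n x < posO n y := by
  constructor
  · rintro ⟨s, t, hs1, hst, htn, hsx, hty⟩
    have h1 := (posA n s hn hs1 (by omega)).2
    have h2 := (posA n t hn (by omega) htn).2
    rw [hsx] at h1; rw [hty] at h2; omega
  · intro h
    obtain ⟨ha, hb, hc⟩ := posB n x hn hx
    obtain ⟨ha', hb', hc'⟩ := posB n y hn hy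
    exact ⟨posO n x, posO n y, ha, h, hb', hc, hc'⟩

lemma classT_unique (n : ℕ) (hn : 9 ≤ n) (F : Finset ℕ) (s s' : ℕ)
    (h : classT n s F) (h' : classT n s' F) : s = s' := by
  obtain ⟨hs1, hsn, hmem, hmin⟩ := h
  obtain ⟨hs1', hsn', hmem', hmin'⟩ := h'
  have hA := posA n s hn hs1 hsn
  have hA' := posA n s' hn hs1' hsn'
  rcases eq_or_ne (alphaSeq n s) (alphaSeq n s') with he | hne
  · have h2 := hA.2; rw [he, hA'.2] at h2; omega
  · have l1 := (ltO_iff n _ _ hn hA.1 hA'.1).mp (hmin _ hmem' hne.symm)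
    have l2 := (ltO_iff n _ _ hn hA'.1 hA.1).mp (hmin' _ hmem hne)
    omega

lemma not_conn_isolated (G : SimpleGraph ℕ) (s : Set ℕ) (v w : ℕ)
    (hv : v ∈ s) (hw : w ∈ s) (hvw : v ≠ w)
    (hiso : ∀ u ∈ s, ¬ G.Adj v u) : ¬ (G.induce s).Connected := by
  intro h
  obtain ⟨p⟩ := h.preconnected ⟨v, hv⟩ ⟨w, hw⟩
  have hnil : ¬ p.Nil := SimpleGraph.Walk.not_nil_of_ne (by
    intro he; exact hvw (congrArg Subtype.val he))
  have hadj := SimpleGraph.Walk.adj_snd hnil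
  exact hiso _ (p.getVert 1).2 hadj

lemma conn_triple (G : SimpleGraph ℕ) (x y z c : ℕ)
    (hc : c = x ∨ c = y ∨ c = z)
    (hx : x = c ∨ G.Adj x c) (hy : y = c ∨ G.Adj y c) (hz : z = c ∨ G.Adj z c) :
    (G.induce ({x, y, z} : Set ℕ)).Connected := by
  have hcs : c ∈ ({x, y, z} : Set ℕ) := by
    rcases hc with rfl | rfl | rfl <;> simp
  rw [SimpleGraph.connected_iff]
  refine ⟨?_, ⟨⟨c, hcs⟩⟩⟩
  have key : ∀ a : ({x, y, z} : Set ℕ), (G.induce ({x, y, z} : Set ℕ)).Reachable a ⟨c, hcs⟩ := by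
    rintro ⟨a, ha⟩
    have ha' : a = x ∨ a = y ∨ a = z := by simpa using ha
    have hac : a = c ∨ G.Adj a c := by rcases ha' with rfl | rfl | rfl <;> assumption
    rcases hac with heq | hadj
    · have hh : (⟨a, ha⟩ : ({x, y, z} : Set ℕ)) = ⟨c, hcs⟩ := Subtype.ext heq
      rw [hh]
    · exact SimpleGraph.Adj.reachable hadj
  exact fun a b => (key a).trans (key b).symm

lemma posO_spec (n x : ℕ) (hn : 9 ≤ n) (hx : x < n) :
    (x = 0 ∧ posO n x = n) ∨
    (1 ≤ x ∧ x < mVal n ∧ posO n x = 2*(mVal n - x)) ∨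
    (mVal n ≤ x ∧ posO n x = 2*(x - mVal n)+1) := by
  have hm : mVal n = (n+1)/2 := rfl
  unfold posO
  split_ifs <;> omega

/-- circular distance at least 3 -/
def gapP (n x y : ℕ) : Prop := (x+3 ≤ y ∧ y+3 ≤ x+n) ∨ (y+3 ≤ x ∧ x+3 ≤ y+n)

lemma not_A2_gap (n x y : ℕ) (hn : 9 ≤ n) (hx : x < n) (hy : y < n) (hxy : x ≠ y)
    (h : ¬ A2 n x y) : gapP n x y := by
  unfold A2 at h; unfold gapP; omega

set_option maxHeartbeats 4000000 in
lemma badcase (n lam a b c : ℕ) (hn : 9 ≤ n)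
    (hl : lam < n) (ha : a < n) (hb : b < n) (hc : c < n)
    (hab : a ≠ b) (hac : a ≠ c) (hbc : b ≠ c)
    (ala : A2 n lam a) (alb : A2 n lam b) (alc : A2 n lam c)
    (hisoG : (gapP n a b ∧ gapP n a c) ∨ (gapP n a b ∧ gapP n b c) ∨ (gapP n a c ∧ gapP n b c))
    (p1 : posO n lam < posO n a) (p2 : posO n a < posO n b) (p3 : posO n a < posO n c) :
    (a = mVal n + 1 ∧ ((b = mVal n - 2 ∧ c = mVal n + 2) ∨ (b = mVal n + 2 ∧ c = mVal n - 2))) ∨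
    (a = mVal n - 1 ∧ ((b = mVal n - 2 ∧ c = mVal n + 2) ∨ (b = mVal n + 2 ∧ c = mVal n - 2))) ∨
    (a = mVal n + 1 ∧ ((b = mVal n - 2 ∧ c = mVal n - 3) ∨ (b = mVal n - 3 ∧ c = mVal n - 2))) := by
  have hm : mVal n = (n+1)/2 := rfl
  unfold gapP at hisoG
  have hreg : lam ≤ 1 ∨ lam = n-2 ∨ lam = n-1 ∨ (2 ≤ lam ∧ lam ≤ n-3) := by
    clear ala alb alc hisoG p1 p2 p3; omega
  rcases hreg with h | h | h | h
  · exfalso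
    clear ala alb alc hisoG
    have sl := posO_spec n lam hn hl
    have sa := posO_spec n a hn ha
    have sb := posO_spec n b hn hb
    have sc := posO_spec n c hn hc
    omega
  · exfalso
    have oa : a+2 = lam ∨ a+1 = lam ∨ a = n-1 ∨ a = 0 := by
      clear alb alc hisoG p1 p2 p3; unfold A2 at ala; omega
    have ob : b+2 = lam ∨ b+1 = lam ∨ b = n-1 ∨ b = 0 := by
      clear ala alc hisoG p1 p2 p3; unfold A2 at alb; omega
    have oc : c+2 = lam ∨ c+1 = lam ∨ c = n-1 ∨ c = 0 := by
      clear ala alb hisoG p1 p2 p3; unfold A2 at alc; omega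
    clear ala alb alc hisoG
    have sl := posO_spec n lam hn hl
    have sa := posO_spec n a hn ha
    have sb := posO_spec n b hn hb
    have sc := posO_spec n c hn hc
    omega
  · exfalso
    clear ala alb alc hisoG
    have sl := posO_spec n lam hn hl
    have sa := posO_spec n a hn ha
    have sb := posO_spec n b hn hb
    have sc := posO_spec n c hn hc
    omega
  · have oa : a+2 = lam ∨ a+1 = lam ∨ a = lam+1 ∨ a = lam+2 := by
      clear alb alc hisoG p1 p2 p3; unfold A2 at ala; omega
    have ob : b+2 = lam ∨ b+1 = lam ∨ b = lam+1 ∨ b = lam+2 := by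
      clear ala alc hisoG p1 p2 p3; unfold A2 at alb; omega
    have oc : c+2 = lam ∨ c+1 = lam ∨ c = lam+1 ∨ c = lam+2 := by
      clear ala alb hisoG p1 p2 p3; unfold A2 at alc; omega
    clear ala alb alc
    have sl := posO_spec n lam hn hl
    have sa := posO_spec n a hn ha
    have sb := posO_spec n b hn hb
    have sc := posO_spec n c hn hc
    have h1 : lam = mVal n ∨ lam + 1 = mVal n := by clear hisoG; omega
    rcases h1 with h1 | h1
    · have h2 : a = mVal n + 1 ∨ a + 1 = mVal n := by clear hisoG; omega
      rcases h2 with h2 | h2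
      · have h3 : (b + 2 = mVal n ∧ c = mVal n + 2) ∨ (b = mVal n + 2 ∧ c + 2 = mVal n) := by
          clear hisoG; omega
        refine Or.inl ⟨h2, ?_⟩
        rcases h3 with ⟨e1, e2⟩ | ⟨e1, e2⟩
        · exact Or.inl ⟨by omega, by omega⟩
        · exact Or.inr ⟨by omega, by omega⟩
      · have h3 : (b + 2 = mVal n ∧ c = mVal n + 2) ∨ (b = mVal n + 2 ∧ c + 2 = mVal n) := by
          clear sl sa sb sc p1 p2 p3 oa; omega
        refine Or.inr (Or.inl ⟨by omega, ?_⟩)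
        rcases h3 with ⟨e1, e2⟩ | ⟨e1, e2⟩
        · exact Or.inl ⟨by omega, by omega⟩
        · exact Or.inr ⟨by omega, by omega⟩
    · have h2 : a = mVal n + 1 := by clear hisoG; omega
      have h3 : (b + 2 = mVal n ∧ c + 3 = mVal n) ∨ (b + 3 = mVal n ∧ c + 2 = mVal n) := by
        clear hisoG; omega
      refine Or.inr (Or.inr ⟨h2, ?_⟩)
      rcases h3 with ⟨e1, e2⟩ | ⟨e1, e2⟩
      · exact Or.inl ⟨by omega, by omega⟩
      · exact Or.inr ⟨by omega, by omega⟩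

end Aux

section Finish

lemma finish_lemma (n : ℕ) (hn : 9 ≤ n) (Fi Fj : Finset ℕ)
    (hFj : IsFacet n Fj) (hD : ¬ memD n Fj)
    (i0 j0 : ℕ) (hi : classT n i0 Fi) (hj : classT n j0 Fj) (hij : i0 < j0)
    (x y : ℕ) (hx : x ∈ cmpl n Fj) (hy : y ∈ cmpl n Fj) (hxy : x ≠ y)
    (hdis : ¬ ((sqCycle n).induce ((({alphaSeq n i0, x, y} : Finset ℕ) : Set ℕ))).Connected) :
    ∃ Fr, IsFacet n Fr ∧ precOrd n Fr Fj ∧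
      ∃ lam ∈ Fj \ Fi, Fr ∩ Fj = Fj.erase lam := by
  classical
  obtain ⟨hi1, hin, himem, himin⟩ := hi
  have hj' := hj
  obtain ⟨hj1, hjn, hjmem, hjmin⟩ := hj'
  have hAi := posA n i0 hn hi1 hin
  have hAj := posA n j0 hn hj1 hjn
  set lam := alphaSeq n i0 with hlamDef
  have hCpos : ∀ z ∈ cmpl n Fj, j0 ≤ posO n z := by
    intro z hz
    have hzn : z < n := by
      have := (Finset.mem_sdiff.mp hz).1
      simpa [Finset.mem_range] using this
    rcases eq_or_ne z (alphaSeq n j0) with rfl | hne2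
    · have := hAj.2; omega
    · have := (ltO_iff n _ _ hn hAj.1 hzn).mp (hjmin z hz hne2)
      have h2 := hAj.2
      omega
  have hlamn : lam < n := hAi.1
  have hplam : posO n lam = i0 := hAi.2
  have hlamC : lam ∉ cmpl n Fj := by
    intro hmem
    have := hCpos lam hmem
    omega
  have hlamFj : lam ∈ Fj := by
    by_contra hno
    exact hlamC (Finset.mem_sdiff.mpr ⟨Finset.mem_range.mpr hlamn, hno⟩)
  have hlamFi : lam ∉ Fi := (Finset.mem_sdiff.mp himem).2
  have hxn : x < n := by
    have := (Finset.mem_sdiff.mp hx).1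
    simpa [Finset.mem_range] using this
  have hyn : y < n := by
    have := (Finset.mem_sdiff.mp hy).1
    simpa [Finset.mem_range] using this
  have hlx : lam ≠ x := fun h => hlamC (h ▸ hx)
  have hly : lam ≠ y := fun h => hlamC (h ▸ hy)
  set T : Finset ℕ := {lam, x, y} with hT
  have hTsub : T ⊆ Finset.range n := by
    intro z hz
    simp only [hT, Finset.mem_insert, Finset.mem_singleton] at hz
    rcases hz with rfl | rfl | rfl <;> simp [Finset.mem_range, hlamn, hxn, hyn]
  have hTcard : T.card = 3 := by
    rw [hT, Finset.card_insert_of_notMem (by simp [hlx, hly]),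
      Finset.card_insert_of_notMem (by simp [hxy]), Finset.card_singleton]
  set Fr : Finset ℕ := Finset.range n \ T with hFrDef
  have hcmplFr : cmpl n Fr = T := by
    rw [cmpl, hFrDef, Finset.sdiff_sdiff_eq_self hTsub]
  have hFrFacet : IsFacet n Fr := by
    refine ⟨Finset.sdiff_subset, ?_, ?_⟩
    · rw [hFrDef, Finset.card_sdiff_of_subset hTsub, Finset.card_range, hTcard]
    · rw [hcmplFr]
      exact hdis
  have hclassTr : classT n i0 Fr := by
    refine ⟨hi1, hin, ?_, ?_⟩
    · rw [hcmplFr]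
      simp [hT, hlamDef]
    · intro z hz hzne
      rw [hcmplFr] at hz
      simp only [hT, Finset.mem_insert, Finset.mem_singleton] at hz
      have hzC : z ∈ cmpl n Fj := by
        rcases hz with rfl | rfl | rfl
        · exact absurd rfl hzne
        · exact hx
        · exact hy
      have hzn : z < n := by
        have := (Finset.mem_sdiff.mp hzC).1
        simpa [Finset.mem_range] using this
      exact (ltO_iff n lam z hn hlamn hzn).mpr (by have := hCpos z hzC; omega)
  -- decomposition of Fj
  have hcard3 : (cmpl n Fj).card = 3 := by
    rw [cmpl, Finset.card_sdiff_of_subset hFj.1, Finset.card_range, hFj.2.1]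
    omega
  have hjE : ((cmpl n Fj).erase (alphaSeq n j0)).card = 2 := by
    rw [Finset.card_erase_of_mem hjmem, hcard3]
  obtain ⟨u, w, huw, hE⟩ := Finset.card_eq_two.mp hjE
  have hCj : cmpl n Fj = {alphaSeq n j0, u, w} := by
    rw [← Finset.insert_erase hjmem, hE]
  have huC : u ∈ (cmpl n Fj).erase (alphaSeq n j0) := by rw [hE]; simp
  have hwC : w ∈ (cmpl n Fj).erase (alphaSeq n j0) := by rw [hE]; simp
  have hau : u ≠ alphaSeq n j0 := (Finset.mem_erase.mp huC).1
  have haw : w ≠ alphaSeq n j0 := (Finset.mem_erase.mp hwC).1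
  have hdj : cDecomp n j0 (min u w) (max u w) Fj := by
    refine ⟨⟨hj1, hjn, hjmem, hjmin⟩, by omega, by omega, by omega, ?_⟩
    rw [hCj]
    rcases le_total u w with h | h
    · rw [min_eq_left h, max_eq_right h]
    · rw [min_eq_right h, max_eq_left h, Finset.pair_comm u w]
  have hdr : cDecomp n i0 (min x y) (max x y) Fr := by
    refine ⟨hclassTr, by omega, by omega, by omega, ?_⟩
    rw [hcmplFr, hT]
    rcases le_total x y with h | h
    · rw [min_eq_left h, max_eq_right h]
    · rw [min_eq_right h, max_eq_left h, Finset.pair_comm x y]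
  have hprec : precOrd n Fr Fj := by
    by_cases hDr : memD n Fr
    · exact Or.inr (Or.inl ⟨hDr, hD, i0, j0, hclassTr, ⟨hj1, hjn, hjmem, hjmin⟩, hij⟩)
    · exact Or.inl ⟨hDr, hD, i0, j0, min x y, max x y, min u w, max u w, hdr, hdj, Or.inl hij⟩
  have hxFj : x ∉ Fj := (Finset.mem_sdiff.mp hx).2
  have hyFj : y ∉ Fj := (Finset.mem_sdiff.mp hy).2
  have hinter : Fr ∩ Fj = Fj.erase lam := by
    ext z
    simp only [hFrDef, hT, Finset.mem_inter, Finset.mem_sdiff, Finset.mem_insert,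
      Finset.mem_singleton, Finset.mem_erase, Finset.mem_range]
    constructor
    · rintro ⟨⟨hzn, hzT⟩, hzF⟩
      exact ⟨fun h => hzT (Or.inl h), hzF⟩
    · rintro ⟨hzl, hzF⟩
      refine ⟨⟨Finset.mem_range.mp (hFj.1 hzF), ?_⟩, hzF⟩
      rintro (rfl | rfl | rfl)
      · exact hzl rfl
      · exact hxFj hzF
      · exact hyFj hzF
  exact ⟨Fr, hFrFacet, hprec, lam, Finset.mem_sdiff.mpr ⟨hlamFj, hlamFi⟩, hinter⟩

lemma finish2 (n : ℕ) (hn : 9 ≤ n) (Fi Fj : Finset ℕ)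
    (hFj : IsFacet n Fj) (hD : ¬ memD n Fj)
    (i0 j0 : ℕ) (hi : classT n i0 Fi) (hj : classT n j0 Fj) (hij : i0 < j0)
    (x y ι w : ℕ) (hx : x ∈ cmpl n Fj) (hy : y ∈ cmpl n Fj) (hxy : x ≠ y)
    (hιmem : ι = alphaSeq n i0 ∨ ι = x ∨ ι = y)
    (hwmem : w = alphaSeq n i0 ∨ w = x ∨ w = y) (hιw : ι ≠ w)
    (h1 : ¬ (sqCycle n).Adj ι (alphaSeq n i0)) (h2 : ¬ (sqCycle n).Adj ι x)
    (h3 : ¬ (sqCycle n).Adj ι y) :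
    ∃ Fr, IsFacet n Fr ∧ precOrd n Fr Fj ∧
      ∃ lam ∈ Fj \ Fi, Fr ∩ Fj = Fj.erase lam := by
  refine finish_lemma n hn Fi Fj hFj hD i0 j0 hi hj hij x y hx hy hxy ?_
  refine not_conn_isolated _ _ ι w ?_ ?_ hιw ?_
  · rcases hιmem with rfl | rfl | rfl <;> simp
  · rcases hwmem with rfl | rfl | rfl <;> simp
  · intro u hu
    simp only [Finset.coe_insert, Set.mem_insert_iff, Finset.coe_singleton,
      Set.mem_singleton_iff] at hu
    rcases hu with rfl | rfl | rfl
    · exact h1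
    · exact h2
    · exact h3

end Finish

/-- Let `Fᵢ ≺ Fⱼ` be facets of `Δ₃(Wₙ)` with `Fⱼ ∉ D`.  If `Fᵢ` and
`Fⱼ` lie in different classes `T_{i₀} ≠ T_{j₀}`, then there is a facet `Fᵣ ≺ Fⱼ` with
`Fᵣ ∩ Fⱼ = Fⱼ∖{λ}` for some `λ ∈ Fⱼ∖Fᵢ`. -/
theorem shelling_different_class (n : ℕ) (hn : 9 ≤ n)
    (Fi Fj : Finset ℕ) (hFi : IsFacet n Fi) (hFj : IsFacet n Fj)
    (hij : precOrd n Fi Fj) (hD : ¬ memD n Fj)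
    (i0 j0 : ℕ) (hne : i0 ≠ j0) (hi : classT n i0 Fi) (hj : classT n j0 Fj) :
    ∃ Fr, IsFacet n Fr ∧ precOrd n Fr Fj ∧
      ∃ lam ∈ Fj \ Fi, Fr ∩ Fj = Fj.erase lam := by
  classical
  have hm : mVal n = (n+1)/2 := rfl
  have hji : i0 < j0 := by
    rcases hij with ⟨-, -, hllt⟩ | ⟨-, -, s, t, hs, ht, hst⟩ | ⟨-, hDj, -⟩ | ⟨-, hDj, -⟩
    · obtain ⟨s, t, s1, s2, t1, t2, cd1, cd2, h⟩ := hllt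
      have e1 := classT_unique n hn Fi s i0 cd1.1 hi
      have e2 := classT_unique n hn Fj t j0 cd2.1 hj
      rcases h with h | ⟨h, -⟩ <;> omega
    · have e1 := classT_unique n hn Fi s i0 hs hi
      have e2 := classT_unique n hn Fj t j0 ht hj
      omega
    · exact absurd hDj hD
    · exact absurd hDj hD
  have hAi := posA n i0 hn hi.1 hi.2.1
  have hAj := posA n j0 hn hj.1 hj.2.1
  set lam := alphaSeq n i0 with hlamDef
  set a := alphaSeq n j0 with haDef
  have hamem : a ∈ cmpl n Fj := hj.2.2.1
  have hcard3 : (cmpl n Fj).card = 3 := by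
    rw [cmpl, Finset.card_sdiff_of_subset hFj.1, Finset.card_range, hFj.2.1]
    omega
  have hjE : ((cmpl n Fj).erase a).card = 2 := by
    rw [Finset.card_erase_of_mem hamem, hcard3]
  obtain ⟨b, c, hbc, hE⟩ := Finset.card_eq_two.mp hjE
  have hCj : cmpl n Fj = {a, b, c} := by rw [← Finset.insert_erase hamem, hE]
  have hbC : b ∈ cmpl n Fj := by rw [hCj]; simp
  have hcC : c ∈ cmpl n Fj := by rw [hCj]; simp
  have hbE : b ∈ (cmpl n Fj).erase a := by rw [hE]; simp
  have hcE : c ∈ (cmpl n Fj).erase a := by rw [hE]; simp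
  have hba : b ≠ a := (Finset.mem_erase.mp hbE).1
  have hca : c ≠ a := (Finset.mem_erase.mp hcE).1
  have hab' : a ≠ b := fun h => hba h.symm
  have hac' : a ≠ c := fun h => hca h.symm
  have han : a < n := hAj.1
  have hbn : b < n := by
    have := (Finset.mem_sdiff.mp hbC).1
    simpa [Finset.mem_range] using this
  have hcn : c < n := by
    have := (Finset.mem_sdiff.mp hcC).1
    simpa [Finset.mem_range] using this
  have hlamn : lam < n := hAi.1
  have hplam : posO n lam = i0 := hAi.2
  have hpa : posO n a = j0 := hAj.2
  have hpb : posO n a < posO n b := (ltO_iff n a b hn han hbn).mp (hj.2.2.2 b hbC hba)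
  have hpc : posO n a < posO n c := (ltO_iff n a c hn han hcn).mp (hj.2.2.2 c hcC hca)
  have hCpos : ∀ z ∈ cmpl n Fj, j0 ≤ posO n z := by
    intro z hz
    have hzn : z < n := by
      have := (Finset.mem_sdiff.mp hz).1
      simpa [Finset.mem_range] using this
    rcases eq_or_ne z a with rfl | hne2
    · omega
    · have := (ltO_iff n a z hn han hzn).mp (hj.2.2.2 z hz hne2)
      omega
  have hlamC : lam ∉ cmpl n Fj := by
    intro hmem
    have := hCpos lam hmem
    omega
  have hla : lam ≠ a := by
    intro h
    rw [h] at hplam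
    omega
  have hlb : lam ≠ b := fun h => hlamC (h ▸ hbC)
  have hlc : lam ≠ c := fun h => hlamC (h ▸ hcC)
  have hdisC : ¬ ((sqCycle n).induce (({a, b, c} : Set ℕ))).Connected := by
    have h0 := hFj.2.2
    rw [hCj] at h0
    have hcoe : ((({a, b, c} : Finset ℕ) : Set ℕ)) = ({a, b, c} : Set ℕ) := by simp
    rwa [hcoe] at h0
  have hiso : (¬(sqCycle n).Adj a b ∧ ¬(sqCycle n).Adj a c) ∨
      (¬(sqCycle n).Adj a b ∧ ¬(sqCycle n).Adj b c) ∨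
      (¬(sqCycle n).Adj a c ∧ ¬(sqCycle n).Adj b c) := by
    by_cases h1 : (sqCycle n).Adj a b <;> by_cases h2 : (sqCycle n).Adj a c <;>
      by_cases h3 : (sqCycle n).Adj b c
    · exact absurd (conn_triple _ a b c a (Or.inl rfl) (Or.inl rfl)
        (Or.inr h1.symm) (Or.inr h2.symm)) hdisC
    · exact absurd (conn_triple _ a b c a (Or.inl rfl) (Or.inl rfl)
        (Or.inr h1.symm) (Or.inr h2.symm)) hdisC
    · exact absurd (conn_triple _ a b c b (Or.inr (Or.inl rfl)) (Or.inr h1)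
        (Or.inl rfl) (Or.inr h3.symm)) hdisC
    · tauto
    · exact absurd (conn_triple _ a b c c (Or.inr (Or.inr rfl)) (Or.inr h2)
        (Or.inr h3) (Or.inl rfl)) hdisC
    · tauto
    · tauto
    · tauto
  have bad : (sqCycle n).Adj lam a → (sqCycle n).Adj lam b → (sqCycle n).Adj lam c → False := by
    intro hv hp hq
    have ala := ((adj_iff n lam a (by omega) hlamn han).mp hv).2
    have alb := ((adj_iff n lam b (by omega) hlamn hbn).mp hp).2
    have alc := ((adj_iff n lam c (by omega) hlamn hcn).mp hq).2
    have c1 : ¬ (sqCycle n).Adj a b → ¬ A2 n a b := fun hno hA =>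
      hno ((adj_iff n a b (by omega) han hbn).mpr ⟨hab', hA⟩)
    have c2 : ¬ (sqCycle n).Adj a c → ¬ A2 n a c := fun hno hA =>
      hno ((adj_iff n a c (by omega) han hcn).mpr ⟨hac', hA⟩)
    have c3 : ¬ (sqCycle n).Adj b c → ¬ A2 n b c := fun hno hA =>
      hno ((adj_iff n b c (by omega) hbn hcn).mpr ⟨hbc, hA⟩)
    have hiso' : (gapP n a b ∧ gapP n a c) ∨ (gapP n a b ∧ gapP n b c) ∨
        (gapP n a c ∧ gapP n b c) := by
      rcases hiso with ⟨u1, u2⟩ | ⟨u1, u2⟩ | ⟨u1, u2⟩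
      · exact Or.inl ⟨not_A2_gap n a b hn han hbn hab' (c1 u1),
          not_A2_gap n a c hn han hcn hac' (c2 u2)⟩
      · exact Or.inr (Or.inl ⟨not_A2_gap n a b hn han hbn hab' (c1 u1),
          not_A2_gap n b c hn hbn hcn hbc (c3 u2)⟩)
      · exact Or.inr (Or.inr ⟨not_A2_gap n a c hn han hcn hac' (c2 u1),
          not_A2_gap n b c hn hbn hcn hbc (c3 u2)⟩)
    rcases badcase n lam a b c hn hlamn han hbn hcn hab' hac' hbc ala alb alc hiso'
        (by omega) hpb hpc with ⟨hA, hBC⟩ | ⟨hA, hBC⟩ | ⟨hA, hBC⟩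
    · apply hD
      refine ⟨j0, hj, Or.inl ⟨by omega, ?_⟩⟩
      rw [hCj]
      rcases hBC with ⟨hB, hC⟩ | ⟨hB, hC⟩
      · rw [show b = a - 3 by omega, show c = a + 1 by omega]
      · rw [show b = a + 1 by omega, show c = a - 3 by omega, Finset.pair_comm (a+1) (a-3)]
    · apply hD
      refine ⟨j0, hj, Or.inr (Or.inl ⟨by omega, ?_⟩)⟩
      rw [hCj]
      rcases hBC with ⟨hB, hC⟩ | ⟨hB, hC⟩
      · rw [show b = a - 1 by omega, show c = a + 3 by omega]
      · rw [show b = a + 3 by omega, show c = a - 1 by omega, Finset.pair_comm (a+3) (a-1)]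
    · apply hD
      refine ⟨j0, hj, Or.inr (Or.inr (Or.inl ⟨by omega, ?_⟩))⟩
      rw [hCj]
      rcases hBC with ⟨hB, hC⟩ | ⟨hB, hC⟩
      · rw [show b = a - 3 by omega, show c = a - 4 by omega, Finset.pair_comm (a-3) (a-4)]
      · rw [show b = a - 4 by omega, show c = a - 3 by omega]
  rcases hiso with ⟨u1, u2⟩ | ⟨u1, u2⟩ | ⟨u1, u2⟩
  · by_cases hv : (sqCycle n).Adj lam a
    · by_cases hp : (sqCycle n).Adj lam b
      · by_cases hq : (sqCycle n).Adj lam c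
        · exact (bad hv hp hq).elim
        · exact finish2 n hn Fi Fj hFj hD i0 j0 hi hj hji a c c lam hamem hcC hac'
            (Or.inr (Or.inr rfl)) (Or.inl rfl) (fun h => hlc h.symm)
            (fun h => hq h.symm) (fun h => u2 h.symm) ((sqCycle n).loopless.irrefl c)
      · exact finish2 n hn Fi Fj hFj hD i0 j0 hi hj hji a b b lam hamem hbC hab'
          (Or.inr (Or.inr rfl)) (Or.inl rfl) (fun h => hlb h.symm)
          (fun h => hp h.symm) (fun h => u1 h.symm) ((sqCycle n).loopless.irrefl b)
    · exact finish2 n hn Fi Fj hFj hD i0 j0 hi hj hji a c a lam hamem hcC hac'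
        (Or.inr (Or.inl rfl)) (Or.inl rfl) (fun h => hla h.symm)
        (fun h => hv h.symm) ((sqCycle n).loopless.irrefl a) u2
  · by_cases hv : (sqCycle n).Adj lam b
    · by_cases hp : (sqCycle n).Adj lam a
      · by_cases hq : (sqCycle n).Adj lam c
        · exact (bad hp hv hq).elim
        · exact finish2 n hn Fi Fj hFj hD i0 j0 hi hj hji b c c lam hbC hcC hbc
            (Or.inr (Or.inr rfl)) (Or.inl rfl) (fun h => hlc h.symm)
            (fun h => hq h.symm) (fun h => u2 h.symm) ((sqCycle n).loopless.irrefl c)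
      · exact finish2 n hn Fi Fj hFj hD i0 j0 hi hj hji b a a lam hbC hamem hba
          (Or.inr (Or.inr rfl)) (Or.inl rfl) (fun h => hla h.symm)
          (fun h => hp h.symm) u1 ((sqCycle n).loopless.irrefl a)
    · exact finish2 n hn Fi Fj hFj hD i0 j0 hi hj hji b c b lam hbC hcC hbc
        (Or.inr (Or.inl rfl)) (Or.inl rfl) (fun h => hlb h.symm)
        (fun h => hv h.symm) ((sqCycle n).loopless.irrefl b) u2
  · by_cases hv : (sqCycle n).Adj lam c
    · by_cases hp : (sqCycle n).Adj lam a
      · by_cases hq : (sqCycle n).Adj lam b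
        · exact (bad hp hq hv).elim
        · exact finish2 n hn Fi Fj hFj hD i0 j0 hi hj hji c b b lam hcC hbC
            (fun h => hbc h.symm) (Or.inr (Or.inr rfl)) (Or.inl rfl) (fun h => hlb h.symm)
            (fun h => hq h.symm) u2 ((sqCycle n).loopless.irrefl b)
      · exact finish2 n hn Fi Fj hFj hD i0 j0 hi hj hji c a a lam hcC hamem hca
          (Or.inr (Or.inr rfl)) (Or.inl rfl) (fun h => hla h.symm)
          (fun h => hp h.symm) u1 ((sqCycle n).loopless.irrefl a)
    · exact finish2 n hn Fi Fj hFj hD i0 j0 hi hj hji c b c lam hcC hbC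
        (fun h => hbc h.symm) (Or.inr (Or.inl rfl)) (Or.inl rfl) (fun h => hlc h.symm)
        (fun h => hv h.symm) ((sqCycle n).loopless.irrefl c) (fun h => u2 h.symm)
end

section
/- Let n ≥ 9 and let F, F' be facets of Δ₃(W_n) with F ∈ T_s, F^c = {α_s} ⊔ {s_1, n−1}, and F'^c = {α_s, s_1, μ} for some μ ∈ F. If α_s <_O μ, then F' ≪ F. -/
open Finset

/-!
Replacing `n − 1` by `μ` in the complement keeps `α_s` as its `<_O`-least element, so `F'` lies
in the same class `T_s` as `F`. The comparison therefore falls to the pairs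
`(min s₁ μ, max s₁ μ)` and `(s₁, n − 1)`, and `μ < n − 1` because `μ ∈ F` while `n − 1 ∉ F`.
-/

theorem mem_cmpl {n x : ℕ} {F : Finset ℕ} : x ∈ cmpl n F ↔ x < n ∧ x ∉ F := by
  simp [cmpl]

theorem classT_of_cmpl_eq_of_ltO {n s a b : ℕ} {F : Finset ℕ} (hs : 1 ≤ s) (hsn : s ≤ n)
    (hF : cmpl n F = {alphaSeq n s, a, b}) (ha : ltO n (alphaSeq n s) a)
    (hb : ltO n (alphaSeq n s) b) : classT n s F := by
  refine ⟨hs, hsn, by simp [hF], fun x hx hxs => ?_⟩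
  rw [hF, mem_insert, mem_insert, mem_singleton] at hx
  rcases hx with rfl | rfl | rfl
  exacts [absurd rfl hxs, ha, hb]

theorem cDecomp_min_max {n s a b : ℕ} {F : Finset ℕ} (hT : classT n s F) (hab : a ≠ b)
    (ha : alphaSeq n s ≠ a) (hb : alphaSeq n s ≠ b) (hF : cmpl n F = {alphaSeq n s, a, b}) :
    cDecomp n s (min a b) (max a b) F := by
  rcases hab.lt_or_gt with h | h
  · rw [min_eq_left h.le, max_eq_right h.le]
    exact ⟨hT, h, ha, hb, hF⟩
  · rw [min_eq_right h.le, max_eq_left h.le]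
    exact ⟨hT, h, hb, ha, by rw [hF, pair_comm a b]⟩

theorem llt_of_exchange_general (n : ℕ) (F F' : Finset ℕ)
    (s s1 : ℕ)
    (hdec : cDecomp n s s1 (n - 1) F) (μ : ℕ) (hμ : μ ∈ F)
    (hc : cmpl n F' = {alphaSeq n s, s1, μ})
    (hlt : ltO n (alphaSeq n s) μ) :
    llt n F' F := by
  have ⟨hT, _, hαs1, _, hcF⟩ := hdec
  have hμF : μ ∉ ({alphaSeq n s, s1, n - 1} : Finset ℕ) :=
    hcF ▸ fun h => (mem_cmpl.1 h).2 hμ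
  simp only [mem_insert, mem_singleton, not_or] at hμF
  obtain ⟨hμα, hμs1, hμn1⟩ := hμF
  have hμn : μ < n := (mem_cmpl.1 (hc ▸ by simp : μ ∈ cmpl n F')).1
  have hT' : classT n s F' :=
    classT_of_cmpl_eq_of_ltO hT.1 hT.2.1 hc (hT.2.2.2 s1 (by simp [hcF]) hαs1.symm) hlt
  refine ⟨s, s, min s1 μ, max s1 μ, s1, n - 1,
    cDecomp_min_max hT' (Ne.symm hμs1) hαs1 (Ne.symm hμα) hc, hdec,
    Or.inr ⟨rfl, ?_⟩⟩
  omega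

/-- Let `F, F'` be facets of `Δ₃(Wₙ)` with `F ∈ T_s`,
`F^c = {α_s} ⊔ {s₁, n−1}`, and `F'^c = {α_s, s₁, μ}` for some `μ ∈ F`.
If `α_s <_O μ`, then `F' ≪ F`. -/
theorem llt_of_exchange (n : ℕ) (hn : 9 ≤ n) (F F' : Finset ℕ)
    (hF : IsFacet n F) (hF' : IsFacet n F') (s s1 : ℕ)
    (hdec : cDecomp n s s1 (n - 1) F) (μ : ℕ) (hμ : μ ∈ F)
    (hc : cmpl n F' = {alphaSeq n s, s1, μ})
    (hlt : ltO n (alphaSeq n s) μ) :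
    llt n F' F :=
  llt_of_exchange_general n F F' s s1 hdec μ hμ hc hlt
end

section
/- Let n ≥ 9 and let F be a facet of Δ₃(W_n) such that either F^c = {x, x+1 (mod n), x+4 (mod n)} or F^c = {x, x+3 (mod n), x+4 (mod n)} for some x ∈ V. Then F is not a spanning facet for the shelling order ≺ (indeed, no facet F̃ preceding F in any order satisfies F̃ ∩ F = F∖{x+2 (mod n)}, since for every ν ∈ F^c the set (F^c∖{ν}) ∪ {x+2 (mod n)} induces a connected subgraph of W_n). -/
open Finset

lemma modc (x i n : ℕ) (hx : x < n) (hi : i < n) :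
    ((x + i) % n = x + i ∧ x + i < n) ∨ ((x + i) % n + n = x + i ∧ n ≤ x + i) := by
  rcases lt_or_ge (x + i) n with hlt | hge
  · exact Or.inl ⟨Nat.mod_eq_of_lt hlt, hlt⟩
  · refine Or.inr ⟨?_, hge⟩
    rw [Nat.mod_eq_sub_mod hge, Nat.mod_eq_of_lt (by omega)]
    omega

lemma adj_shift (n x i j : ℕ) (hx : x < n) (hj : j < n) (hij : j = i + 1 ∨ j = i + 2) :
    (sqCycle n).Adj ((x + i) % n) ((x + j) % n) := by
  have hn : 0 < n := by omega
  have hi : i < n := by omega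
  have e1 := modc x i n hx hi
  have e2 := modc x j n hx hj
  have hne : (x + i) % n ≠ (x + j) % n := by omega
  refine ⟨Nat.mod_lt _ hn, Nat.mod_lt _ hn, hne, ?_⟩
  rcases hij with rfl | rfl
  · left; rw [Nat.mod_add_mod]; congr 1
  · right; left; rw [Nat.mod_add_mod]; congr 1

lemma connected_of_chain (n a b c : ℕ) (S : Set ℕ) (hS : S = {a, b, c})
    (hab : (sqCycle n).Adj a b) (hbc : (sqCycle n).Adj b c) :
    ((sqCycle n).induce S).Connected := by
  subst hS
  have hb : b ∈ ({a, b, c} : Set ℕ) := by simp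
  rw [SimpleGraph.connected_iff]
  refine ⟨?_, ⟨⟨b, hb⟩⟩⟩
  have key : ∀ w : ({a, b, c} : Set ℕ),
      ((sqCycle n).induce ({a, b, c} : Set ℕ)).Reachable w ⟨b, hb⟩ := by
    rintro ⟨w, hw⟩
    simp only [Set.mem_insert_iff, Set.mem_singleton_iff] at hw
    rcases hw with rfl | rfl | rfl
    · exact SimpleGraph.Adj.reachable (by exact hab)
    · exact SimpleGraph.Reachable.refl _
    · exact (SimpleGraph.Adj.reachable (by exact hbc)).symm
  intro u v
  exact (key u).trans (key v).symm

/-- If `F` is a facet of `Δ₃(Wₙ)` with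
`F^c = {x, x+1 (mod n), x+4 (mod n)}` or `F^c = {x, x+3 (mod n), x+4 (mod n)}`, then
`F` is not a spanning facet; indeed for every `ν ∈ F^c`, the set
`(F^c∖{ν}) ∪ {x+2 (mod n)}` induces a connected subgraph of `Wₙ`. -/
theorem not_spanning_of_special_complement (n : ℕ) (hn : 9 ≤ n) (F : Finset ℕ)
    (hF : IsFacet n F) (x : ℕ) (hx : x < n)
    (h : cmpl n F = {x, (x + 1) % n, (x + 4) % n} ∨
         cmpl n F = {x, (x + 3) % n, (x + 4) % n}) :
    ¬ IsSpanningFacet n F ∧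
      ∀ ν ∈ cmpl n F,
        ((sqCycle n).induce
          (↑(insert ((x + 2) % n) ((cmpl n F).erase ν)) : Set ℕ)).Connected := by
  obtain ⟨hFsub, hFcard, hFdisc⟩ := hF
  have hn0 : 0 < n := by omega
  have e1 := modc x 1 n hx (by omega)
  have e2 := modc x 2 n hx (by omega)
  have e3 := modc x 3 n hx (by omega)
  have e4 := modc x 4 n hx (by omega)
  set b1 := (x + 1) % n with hb1
  set b2 := (x + 2) % n with hb2
  set b3 := (x + 3) % n with hb3
  set b4 := (x + 4) % n with hb4
  have adj01 : (sqCycle n).Adj x b1 := by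
    have := adj_shift n x 0 1 hx (by omega) (Or.inl rfl)
    simpa [Nat.mod_eq_of_lt hx] using this
  have adj02 : (sqCycle n).Adj x b2 := by
    have := adj_shift n x 0 2 hx (by omega) (Or.inr rfl)
    simpa [Nat.mod_eq_of_lt hx] using this
  have adj12 : (sqCycle n).Adj b1 b2 := adj_shift n x 1 2 hx (by omega) (Or.inl rfl)
  have adj23 : (sqCycle n).Adj b2 b3 := adj_shift n x 2 3 hx (by omega) (Or.inl rfl)
  have adj24 : (sqCycle n).Adj b2 b4 := adj_shift n x 2 4 hx (by omega) (Or.inr rfl)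
  have adj34 : (sqCycle n).Adj b3 b4 := adj_shift n x 3 4 hx (by omega) (Or.inl rfl)
  have part2 : ∀ ν ∈ cmpl n F,
      ((sqCycle n).induce (↑(insert b2 ((cmpl n F).erase ν)) : Set ℕ)).Connected := by
    intro ν hν
    rcases h with hC | hC
    · rw [hC] at hν ⊢
      simp only [Finset.mem_insert, Finset.mem_singleton] at hν
      rcases hν with rfl | rfl | rfl
      · refine connected_of_chain n b1 b2 b4 _ ?_ adj12 adj24
        ext t
        simp only [Finset.coe_insert, Set.mem_insert_iff, Finset.coe_erase, Set.mem_diff,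
          Finset.mem_coe, Finset.mem_insert, Finset.mem_singleton, Set.mem_singleton_iff]
        omega
      · refine connected_of_chain n x b2 b4 _ ?_ adj02 adj24
        ext t
        simp only [Finset.coe_insert, Set.mem_insert_iff, Finset.coe_erase, Set.mem_diff,
          Finset.mem_coe, Finset.mem_insert, Finset.mem_singleton, Set.mem_singleton_iff]
        omega
      · refine connected_of_chain n x b1 b2 _ ?_ adj01 adj12
        ext t
        simp only [Finset.coe_insert, Set.mem_insert_iff, Finset.coe_erase, Set.mem_diff,
          Finset.mem_coe, Finset.mem_insert, Finset.mem_singleton, Set.mem_singleton_iff]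
        omega
    · rw [hC] at hν ⊢
      simp only [Finset.mem_insert, Finset.mem_singleton] at hν
      rcases hν with rfl | rfl | rfl
      · refine connected_of_chain n b2 b3 b4 _ ?_ adj23 adj34
        ext t
        simp only [Finset.coe_insert, Set.mem_insert_iff, Finset.coe_erase, Set.mem_diff,
          Finset.mem_coe, Finset.mem_insert, Finset.mem_singleton, Set.mem_singleton_iff]
        omega
      · refine connected_of_chain n x b2 b4 _ ?_ adj02 adj24
        ext t
        simp only [Finset.coe_insert, Set.mem_insert_iff, Finset.coe_erase, Set.mem_diff,
          Finset.mem_coe, Finset.mem_insert, Finset.mem_singleton, Set.mem_singleton_iff]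
        omega
      · refine connected_of_chain n x b2 b3 _ ?_ adj02 adj23
        ext t
        simp only [Finset.coe_insert, Set.mem_insert_iff, Finset.coe_erase, Set.mem_diff,
          Finset.mem_coe, Finset.mem_insert, Finset.mem_singleton, Set.mem_singleton_iff]
        omega
  refine ⟨?_, part2⟩
  rintro ⟨-, hspan⟩
  have hb2n : b2 < n := by omega
  have hlam : b2 ∈ F := by
    by_contra hb2F
    have hmem : b2 ∈ cmpl n F := by
      simp [cmpl, Finset.mem_sdiff, Finset.mem_range, hb2n, hb2F]
    rcases h with hC | hC <;> rw [hC] at hmem <;>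
      simp only [Finset.mem_insert, Finset.mem_singleton] at hmem <;> omega
  obtain ⟨G, hGfac, -, hGint⟩ := hspan b2 hlam
  obtain ⟨hGsub, hGcard, hGdisc⟩ := hGfac
  have hsub : F.erase b2 ⊆ G := by
    rw [← hGint]; exact Finset.inter_subset_left
  have hb2G : b2 ∉ G := by
    intro hb2G
    have : b2 ∈ F.erase b2 := by
      rw [← hGint]; exact Finset.mem_inter.mpr ⟨hb2G, hlam⟩
    simp at this
  have hcard' : (F.erase b2).card = n - 4 := by
    rw [Finset.card_erase_of_mem hlam, hFcard]
    omega
  have hcardF : 3 ≤ (Finset.range n).card := by simp; omega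
  have hdiff : (G \ F.erase b2).card = 1 := by
    rw [Finset.card_sdiff_of_subset hsub, hGcard, hcard']
    have : F ⊆ Finset.range n := hFsub
    have hle : F.card ≤ n := by
      have := Finset.card_le_card hFsub
      simpa using this
    omega
  obtain ⟨μ, hμ⟩ := Finset.card_eq_one.mp hdiff
  have hGeq' : G = F.erase b2 ∪ {μ} := by
    rw [← hμ, Finset.union_sdiff_of_subset hsub]
  have hμG : μ ∈ G := by
    have : μ ∈ G \ F.erase b2 := by rw [hμ]; simp
    exact (Finset.mem_sdiff.mp this).1
  have hμnotF : μ ∉ F := by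
    intro hμF
    have : μ ∈ G \ F.erase b2 := by rw [hμ]; simp
    have hμne : μ ∉ F.erase b2 := (Finset.mem_sdiff.mp this).2
    have hμb2 : μ ≠ b2 := fun hh => hb2G (hh ▸ hμG)
    exact hμne (Finset.mem_erase.mpr ⟨hμb2, hμF⟩)
  have hμn : μ < n := by
    have := hGsub hμG
    simpa using this
  have hμc : μ ∈ cmpl n F := by
    simp [cmpl, Finset.mem_sdiff, Finset.mem_range, hμn, hμnotF]
  have hμb2 : μ ≠ b2 := fun hh => hb2G (hh ▸ hμG)
  have hb2notF : b2 ∉ cmpl n F := by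
    simp [cmpl, Finset.mem_sdiff, hlam]
  have hGc : cmpl n G = insert b2 ((cmpl n F).erase μ) := by
    ext t
    simp only [cmpl, Finset.mem_sdiff, Finset.mem_range, hGeq', Finset.mem_union,
      Finset.mem_erase, Finset.mem_singleton, Finset.mem_insert]
    constructor
    · rintro ⟨htn, ht⟩
      push_neg at ht
      by_cases htb2 : t = b2
      · exact Or.inl htb2
      · exact Or.inr ⟨ht.2, htn, ht.1 htb2⟩
    · rintro (rfl | ⟨htμ, htn, htF⟩)
      · refine ⟨hb2n, ?_⟩
        rintro (⟨hne, -⟩ | rfl)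
        · exact hne rfl
        · exact hμb2 rfl
      · refine ⟨htn, ?_⟩
        rintro (⟨-, hF⟩ | rfl)
        · exact htF hF
        · exact htμ rfl
  apply hGdisc
  rw [hGc]
  exact part2 μ hμc
end

section
/- Let n ≥ 9 and let F, F' be facets of Δ₃(W_n) with F ∈ T_s and F' ∈ T_t for some s ≠ t, where F^c = {α_s} ⊔ {s_1, s_2} and F'^c = {μ, s_1, s_2} for some μ ∈ F. If α_s <_O μ, then F ≺ F'. -/
open Finset

lemma alphaSeq_cases (n t : ℕ) (h1 : 1 ≤ t) (h2 : t ≤ n) :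
    (t % 2 = 1 ∧ mVal n + t / 2 < n ∧ alphaSeq n t = mVal n + t / 2) ∨
    (t % 2 = 1 ∧ mVal n + t / 2 = n ∧ alphaSeq n t = 0) ∨
    (t % 2 = 0 ∧ alphaSeq n t = mVal n - t / 2) := by
  have hm : mVal n = (n + 1) / 2 := rfl
  rcases Nat.even_or_odd t with he | ho
  · right; right
    have h0 : t % 2 = 0 := Nat.even_iff.mp he
    have hpow : ((-1 : ℤ)) ^ (t - 1) = -1 :=
      Odd.neg_one_pow (Nat.odd_iff.mpr (by omega))
    have e : ((mVal n : ℤ) + (-1) ^ (t - 1) * ((t / 2 : ℕ) : ℤ)) % n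
        = (mVal n : ℤ) - ((t / 2 : ℕ) : ℤ) := by
      rw [hpow]
      have : ((mVal n : ℤ) + (-1) * ((t / 2 : ℕ) : ℤ))
          = (mVal n : ℤ) - ((t / 2 : ℕ) : ℤ) := by ring
      rw [this]
      exact Int.emod_eq_of_lt (by omega) (by omega)
    refine ⟨h0, ?_⟩
    unfold alphaSeq
    rw [e]
    omega
  · have h0 : t % 2 = 1 := Nat.odd_iff.mp ho
    have hpow : ((-1 : ℤ)) ^ (t - 1) = 1 :=
      Even.neg_one_pow (Nat.even_iff.mpr (by omega))
    have hle : mVal n + t / 2 ≤ n := by omega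
    rcases lt_or_eq_of_le hle with hl | he
    · left
      refine ⟨h0, hl, ?_⟩
      have e : ((mVal n : ℤ) + (-1) ^ (t - 1) * ((t / 2 : ℕ) : ℤ)) % n
          = (mVal n : ℤ) + ((t / 2 : ℕ) : ℤ) := by
        rw [hpow, one_mul]
        exact Int.emod_eq_of_lt (by omega) (by omega)
      unfold alphaSeq
      rw [e]
      omega
    · right; left
      refine ⟨h0, he, ?_⟩
      have e : ((mVal n : ℤ) + (-1) ^ (t - 1) * ((t / 2 : ℕ) : ℤ)) % n = 0 := by
        rw [hpow, one_mul]
        have : ((mVal n : ℤ) + ((t / 2 : ℕ) : ℤ)) = (n : ℤ) := by omega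
        rw [this]
        exact Int.emod_self
      unfold alphaSeq
      rw [e]
      rfl

lemma alphaSeq_inj_s11 (n a b : ℕ) (ha1 : 1 ≤ a) (ha2 : a ≤ n) (hb1 : 1 ≤ b) (hb2 : b ≤ n)
    (h : alphaSeq n a = alphaSeq n b) : a = b := by
  have hm : mVal n = (n + 1) / 2 := rfl
  rcases alphaSeq_cases n a ha1 ha2 with ⟨p1, p2, p3⟩ | ⟨p1, p2, p3⟩ | ⟨p1, p3⟩ <;>
    rcases alphaSeq_cases n b hb1 hb2 with ⟨q1, q2, q3⟩ | ⟨q1, q2, q3⟩ | ⟨q1, q3⟩ <;>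
    omega

lemma lt_of_ltO (n s t : ℕ) (hs1 : 1 ≤ s) (hs2 : s ≤ n) (ht1 : 1 ≤ t) (ht2 : t ≤ n)
    (h : ltO n (alphaSeq n s) (alphaSeq n t)) : s < t := by
  obtain ⟨a, b, ha, hab, hb, hA, hB⟩ := h
  have e1 := alphaSeq_inj_s11 n a s ha (by omega) hs1 hs2 hA
  have e2 := alphaSeq_inj_s11 n b t (by omega) hb ht1 ht2 hB
  omega

/-- If `F ∈ T_s`, `F' ∈ T_t` with `s ≠ t`, `F^c = {α_s} ⊔ {s₁, s₂}`,
`F'^c = {μ, s₁, s₂}` for some `μ ∈ F`, and `α_s <_O μ`, then `F ≺ F'`. -/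
theorem prec_of_alpha_ltO (n : ℕ) (hn : 9 ≤ n) (F F' : Finset ℕ)
    (hF : IsFacet n F) (hF' : IsFacet n F')
    (s t s1 s2 : ℕ) (hst : s ≠ t)
    (hdec : cDecomp n s s1 s2 F) (hTt : classT n t F')
    (μ : ℕ) (hμ : μ ∈ F) (hc : cmpl n F' = {μ, s1, s2})
    (hlt : ltO n (alphaSeq n s) μ) :
    precOrd n F F' := by
  obtain ⟨hTs, hs12, hns1, hns2, hcF⟩ := hdec
  obtain ⟨hs1n, hsn, hsmem, hsleast⟩ := id hTs
  obtain ⟨ht1n, htn, htmem, htleast⟩ := id hTt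
  have hαsF : alphaSeq n s ∉ F := (Finset.mem_sdiff.mp hsmem).2
  have hμαs : μ ≠ alphaSeq n s := fun h => hαsF (h ▸ hμ)
  have hs1c : s1 ∈ cmpl n F := by rw [hcF]; simp
  have hs2c : s2 ∈ cmpl n F := by rw [hcF]; simp
  have hμs1 : μ ≠ s1 := fun h => (Finset.mem_sdiff.mp hs1c).2 (h ▸ hμ)
  have hμs2 : μ ≠ s2 := fun h => (Finset.mem_sdiff.mp hs2c).2 (h ▸ hμ)
  have hαt : alphaSeq n t ∈ ({μ, s1, s2} : Finset ℕ) := by rw [← hc]; exact htmem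
  simp only [Finset.mem_insert, Finset.mem_singleton] at hαt
  have hltst : ltO n (alphaSeq n s) (alphaSeq n t) := by
    rcases hαt with h | h | h
    · rw [h]; exact hlt
    · rw [h]; exact hsleast s1 hs1c (Ne.symm hns1)
    · rw [h]; exact hsleast s2 hs2c (Ne.symm hns2)
  have hslt : s < t := lt_of_ltO n s t hs1n hsn ht1n htn hltst
  have hllt : llt n F F' := by
    rcases hαt with h | h | h
    · exact ⟨s, t, s1, s2, s1, s2, ⟨hTs, hs12, hns1, hns2, hcF⟩,
        ⟨hTt, hs12, by rw [h]; exact fun e => hμs1 e,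
          by rw [h]; exact fun e => hμs2 e, by rw [hc, h]⟩, Or.inl hslt⟩
    · refine ⟨s, t, s1, s2, min μ s2, max μ s2, ⟨hTs, hs12, hns1, hns2, hcF⟩,
        ⟨hTt, by omega, by rw [h]; omega, by rw [h]; omega, ?_⟩, Or.inl hslt⟩
      rw [hc, h]
      ext x
      simp only [Finset.mem_insert, Finset.mem_singleton]
      omega
    · refine ⟨s, t, s1, s2, min μ s1, max μ s1, ⟨hTs, hs12, hns1, hns2, hcF⟩,
        ⟨hTt, by omega, by rw [h]; omega, by rw [h]; omega, ?_⟩, Or.inl hslt⟩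
      rw [hc, h]
      ext x
      simp only [Finset.mem_insert, Finset.mem_singleton]
      omega
  by_cases hDF : memD n F <;> by_cases hDF' : memD n F'
  · exact Or.inr (Or.inr (Or.inr ⟨hDF, hDF', hllt⟩))
  · exact Or.inr (Or.inl ⟨hDF, hDF', s, t, hTs, hTt, hslt⟩)
  · exact Or.inr (Or.inr (Or.inl ⟨hDF, hDF', s, t, hTs, hTt, le_of_lt hslt⟩))
  · exact Or.inl ⟨hDF, hDF', hllt⟩
end
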